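/- Let c > 0, 0 ≤ r < s, a, b ∈ ℝ with |b - a| ≤ c(s - r), u = (r+s)/2, and let d lie in the midpoint interval [max(a,b) - c(s-r)/2, min(a,b) + c(s-r)/2]. Then P^{s,b}_{u,d} is nonempty and P^{s,b}_{u,d} ⊆ P^{s,b}_{r,a}. -/

import Mathlib

/-
The apex `(s, b)` lies in `P^{s,b}_{u,d}` once `d` is within `c (s - u)` of `b`, and moving
the forward apex from `(r, a)` to `(u, d)` with `|d - a| ≤ c (u - r)` shrinks the forward cone by
the triangle inequality. The midpoint interval is exactly the set of `d` within `c (s - r) / 2`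
of both `a` and `b`.
-/

/-- The "parallelogram" `P^{q,β}_{p,α}`: intersection of the forward Lipschitz cone at
`(p, α)` and the backward Lipschitz cone at `(q, β)`. -/
def para (c p q α β : ℝ) : Set (ℝ × ℝ) :=
  {z : ℝ × ℝ | p ≤ z.1 ∧ z.1 ≤ q ∧ |z.2 - α| ≤ c * (z.1 - p) ∧ |z.2 - β| ≤ c * (q - z.1)}

open Set

lemma abs_sub_le_of_mem_Icc_max_min {a b d h : ℝ} (hd : d ∈ Icc (max a b - h) (min a b + h)) :
    |d - a| ≤ h ∧ |d - b| ≤ h := by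
  obtain ⟨hlo, hhi⟩ := hd
  exact ⟨abs_sub_le_iff.2 ⟨by linarith [min_le_left a b], by linarith [le_max_left a b]⟩,
    abs_sub_le_iff.2 ⟨by linarith [min_le_right a b], by linarith [le_max_right a b]⟩⟩

section Para

variable {c p p' q α α' β : ℝ}

lemma apex_mem_para (hpq : p ≤ q) (hβ : |β - α| ≤ c * (q - p)) : (q, β) ∈ para c p q α β :=
  ⟨hpq, le_rfl, hβ, by simp⟩

lemma para_subset_para_of_le (hp : p ≤ p') (hα : |α' - α| ≤ c * (p' - p)) :
    para c p' q α' β ⊆ para c p q α β := by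
  rintro ⟨t, x⟩ ⟨hp't, htq, hx, hxβ⟩
  refine ⟨hp.trans hp't, htq, ?_, hxβ⟩
  calc |x - α| ≤ |x - α'| + |α' - α| := abs_sub_le _ _ _
    _ ≤ c * (t - p') + c * (p' - p) := add_le_add hx hα
    _ = c * (t - p) := by ring

end Para

theorem stmt_5_general (c r s a b u d : ℝ) (hrs : r < s)
    (hu : u = (r + s) / 2)
    (hd : d ∈ Set.Icc (max a b - c * (s - r) / 2) (min a b + c * (s - r) / 2)) :
    (para c u s d b).Nonempty ∧ para c u s d b ⊆ para c r s a b := by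
  obtain ⟨hda, hdb⟩ := abs_sub_le_of_mem_Icc_max_min hd
  have hsu : c * (s - u) = c * (s - r) / 2 := by rw [hu]; ring
  have hur : c * (u - r) = c * (s - r) / 2 := by rw [hu]; ring
  refine ⟨⟨_, apex_mem_para (by linarith) ?_⟩, para_subset_para_of_le (by linarith) ?_⟩
  · rwa [abs_sub_comm, hsu]
  · rwa [hur]

theorem stmt_5 (c r s a b u d : ℝ) (hc : 0 < c) (hr : 0 ≤ r) (hrs : r < s)
    (hL : |b - a| ≤ c * (s - r)) (hu : u = (r + s) / 2)
    (hd : d ∈ Set.Icc (max a b - c * (s - r) / 2) (min a b + c * (s - r) / 2)) :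
    (para c u s d b).Nonempty ∧ para c u s d b ⊆ para c r s a b :=
  stmt_5_general c r s a b u d hrs hu hd
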